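/- arXiv:1810.09915 — 2 statements merged into one kernel-verified Lean document; each statement's English description precedes it below -/
import Mathlib

section
/- For every x ∈ (0,1), x·φ₁''(x) − φ₁'(x) > 0, where φ₁' and φ₁'' denote the first and second derivatives of φ₁. -/
open Real BigOperators Finset

/-- The angle `θ_k = 2πk/ℓ`. -/
noncomputable def theta (ℓ k : ℕ) : ℝ := 2 * Real.pi * k / ℓ

/-- `φ_ν(x) = Σ_{k=0}^{ℓ-1} (1 + x² - 2x cos θ_k)^{-ν/2}`. -/
noncomputable def phi (ℓ : ℕ) (ν : ℝ) (x : ℝ) : ℝ :=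
  ∑ k ∈ Finset.range ℓ, (1 + x ^ 2 - 2 * x * Real.cos (theta ℓ k)) ^ (-(ν / 2))

noncomputable def bcoef : ℕ → ℝ
  | 0 => 1
  | (m+1) => bcoef m * (2*m+1) / (2*m+2)

lemma bcoef_pos : ∀ m, 0 < bcoef m
  | 0 => one_pos
  | (m+1) => by
      have := bcoef_pos m
      unfold bcoef
      positivity

lemma bcoef_le_one : ∀ m, bcoef m ≤ 1
  | 0 => le_refl 1
  | (m+1) => by
      have h := bcoef_le_one m
      have hp := bcoef_pos m
      unfold bcoef
      rw [div_le_one (by positivity)]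
      nlinarith

lemma bcoef_succ_mul (m : ℕ) : ((m:ℝ)+1) * bcoef (m+1) = ((m:ℝ) + 1/2) * bcoef m := by
  show ((m:ℝ)+1) * (bcoef m * (2*m+1) / (2*m+2)) = _
  field_simp

lemma weighted_refl (N : ℕ) (c : ℕ → ℕ → ℝ) (hc : ∀ i j, c i j = c j i) :
    2 * ∑ m ∈ Finset.range (N+1), (m:ℝ) * c m (N - m)
      = (N:ℝ) * ∑ m ∈ Finset.range (N+1), c m (N - m) := by
  have h := Finset.sum_range_reflect (fun j => (j:ℝ) * c j (N-j)) (N+1)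
  simp only [Nat.add_sub_cancel] at h
  rw [two_mul]
  nth_rewrite 1 [← h]
  rw [← Finset.sum_add_distrib, Finset.mul_sum]
  apply Finset.sum_congr rfl
  intro j hj
  rw [Finset.mem_range] at hj
  have hj' : j ≤ N := Nat.lt_succ_iff.mp hj
  have h1 : N - (N - j) = j := by omega
  have h2 : ((N - j : ℕ) : ℝ) = (N:ℝ) - j := by
    push_cast [Nat.cast_sub hj']; ring
  rw [h1, h2, hc (N-j) j]
  ring

lemma bcoef_conv (n : ℕ) : ∑ m ∈ Finset.range (n+1), bcoef m * bcoef (n - m) = 1 := by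
  induction n with
  | zero => simp [bcoef]
  | succ n ih =>
      set T : ℝ := ∑ m ∈ Finset.range (n+2), bcoef m * bcoef (n+1-m) with hT
      have h2A : 2 * ∑ m ∈ Finset.range (n+2), (m:ℝ) * (bcoef m * bcoef (n+1-m))
          = ((n:ℝ)+1) * T := by
        have := weighted_refl (n+1) (fun i j => bcoef i * bcoef j) (fun i j => mul_comm _ _)
        push_cast at this ⊢
        convert this using 2 <;> norm_num
      have hshift : ∑ m ∈ Finset.range (n+2), (m:ℝ) * (bcoef m * bcoef (n+1-m))
          = ∑ j ∈ Finset.range (n+1), ((j:ℝ) + 1/2) * (bcoef j * bcoef (n-j)) := by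
        rw [Finset.sum_range_succ']
        simp only [Nat.cast_zero, zero_mul, add_zero]
        apply Finset.sum_congr rfl
        intro j _
        have key : (((j:ℕ)+1 : ℕ):ℝ) * bcoef (j+1) = ((j:ℝ)+1/2) * bcoef j := by
          push_cast
          exact bcoef_succ_mul j
        have hnn : n + 1 - (j+1) = n - j := by omega
        push_cast
        push_cast at key
        rw [← mul_assoc, key]
        ring
      have hB : 2 * ∑ j ∈ Finset.range (n+1), (j:ℝ) * (bcoef j * bcoef (n-j))
          = (n:ℝ) * ∑ j ∈ Finset.range (n+1), bcoef j * bcoef (n-j) :=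
        weighted_refl n (fun i j => bcoef i * bcoef j) (fun i j => mul_comm _ _)
      have hsplit : ∑ j ∈ Finset.range (n+1), ((j:ℝ) + 1/2) * (bcoef j * bcoef (n-j))
          = (∑ j ∈ Finset.range (n+1), (j:ℝ) * (bcoef j * bcoef (n-j)))
            + (1/2) * ∑ j ∈ Finset.range (n+1), bcoef j * bcoef (n-j) := by
        rw [Finset.mul_sum, ← Finset.sum_add_distrib]
        apply Finset.sum_congr rfl; intro j _; ring
      rw [hshift, hsplit, ih] at h2A
      have hTval : ((n:ℝ)+1) * T = ((n:ℝ)+1) * 1 := by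
        rw [← h2A]
        nlinarith [hB, ih]
      have hpos : ((n:ℝ)+1) ≠ 0 := by positivity
      exact mul_left_cancel₀ hpos hTval

section ComplexSeries
open Complex

noncomputable def G (z : ℂ) : ℂ := ∑' m : ℕ, (bcoef m : ℂ) * z ^ m

lemma summable_norm_G {z : ℂ} (hz : ‖z‖ < 1) :
    Summable (fun m : ℕ => ‖(bcoef m : ℂ) * z ^ m‖) := by
  apply Summable.of_nonneg_of_le (fun m => norm_nonneg _) (fun m => ?_)
    (summable_geometric_of_lt_one (norm_nonneg z) hz)
  rw [norm_mul, norm_pow]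
  have h1 : ‖((bcoef m : ℝ) : ℂ)‖ ≤ 1 := by
    rw [Complex.norm_real, Real.norm_eq_abs, abs_of_pos (bcoef_pos m)]
    exact bcoef_le_one m
  calc ‖((bcoef m : ℝ):ℂ)‖ * ‖z‖^m ≤ 1 * ‖z‖^m := by
        apply mul_le_mul_of_nonneg_right h1 (by positivity)
    _ = ‖z‖^m := one_mul _
  
lemma hasSum_G {z : ℂ} (hz : ‖z‖ < 1) :
    HasSum (fun m : ℕ => (bcoef m : ℂ) * z ^ m) (G z) :=
  ((summable_norm_G hz).of_norm).hasSum

lemma G_sq {z : ℂ} (hz : ‖z‖ < 1) : G z * G z = (1 - z)⁻¹ := by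
  have h := tsum_mul_tsum_eq_tsum_sum_antidiagonal_of_summable_norm
    (f := fun m : ℕ => (bcoef m : ℂ) * z ^ m) (g := fun m : ℕ => (bcoef m : ℂ) * z ^ m)
    (summable_norm_G hz) (summable_norm_G hz)
  rw [show (fun m : ℕ => (bcoef m : ℂ) * z ^ m) = fun m : ℕ => (bcoef m : ℂ) * z ^ m from rfl] at h
  have hG : G z * G z = ∑' n : ℕ, ∑ kl ∈ Finset.HasAntidiagonal.antidiagonal n,
      ((bcoef kl.1 : ℂ) * z ^ kl.1) * ((bcoef kl.2 : ℂ) * z ^ kl.2) := h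
  rw [hG]
  have hinner : ∀ n : ℕ, ∑ kl ∈ Finset.HasAntidiagonal.antidiagonal n,
      ((bcoef kl.1 : ℂ) * z ^ kl.1) * ((bcoef kl.2 : ℂ) * z ^ kl.2) = z ^ n := by
    intro n
    rw [Finset.Nat.sum_antidiagonal_eq_sum_range_succ_mk]
    have : ∀ m ∈ Finset.range (n+1), ((bcoef m : ℂ) * z ^ m) * ((bcoef (n-m) : ℂ) * z ^ (n-m))
        = ((bcoef m * bcoef (n-m) : ℝ) : ℂ) * z ^ n := by
      intro m hm
      rw [Finset.mem_range] at hm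
      have : z ^ m * z ^ (n - m) = z ^ n := by
        rw [← pow_add]
        congr 1
        omega
      push_cast
      rw [← this]
      ring
    rw [Finset.sum_congr rfl this, ← Finset.sum_mul, ← Complex.ofReal_sum]
    rw [bcoef_conv n]
    simp
  rw [tsum_congr hinner]
  exact tsum_geometric_of_norm_lt_one hz

lemma G_conj {z : ℂ} (hz : ‖z‖ < 1) : G ((starRingEnd ℂ) z) = (starRingEnd ℂ) (G z) := by
  have h := hasSum_G hz
  have h2 : HasSum (fun m : ℕ => (starRingEnd ℂ) ((bcoef m : ℂ) * z ^ m)) ((starRingEnd ℂ) (G z)) :=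
    h.map ((starRingEnd ℂ) : ℂ →+* ℂ).toAddMonoidHom Complex.continuous_conj
  have h3 : (fun m : ℕ => (starRingEnd ℂ) ((bcoef m : ℂ) * z ^ m))
      = fun m : ℕ => (bcoef m : ℂ) * ((starRingEnd ℂ) z) ^ m := by
    funext m
    simp [map_mul, map_pow, Complex.conj_ofReal]
  rw [h3] at h2
  have hz' : ‖(starRingEnd ℂ) z‖ < 1 := by
    rwa [show ‖(starRingEnd ℂ) z‖ = ‖z‖ from RCLike.norm_conj z]
  exact (hasSum_G hz').unique h2

lemma norm_one_sub_sq {z : ℂ} (hz : ‖z‖ < 1) :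
    ((1 - z) * (1 - (starRingEnd ℂ) z)) = ((Complex.normSq (1 - z) : ℝ) : ℂ) := by
  rw [← Complex.mul_conj]
  simp

lemma G_mul_G_conj {z : ℂ} (hz : ‖z‖ < 1) :
    G z * G ((starRingEnd ℂ) z) = ((Complex.normSq (1-z) : ℝ) ^ (-(1/2 : ℝ)) : ℝ) := by
  have hz' : ‖(starRingEnd ℂ) z‖ < 1 := by
    rwa [show ‖(starRingEnd ℂ) z‖ = ‖z‖ from RCLike.norm_conj z]
  have h1 : G z * G ((starRingEnd ℂ) z) = ((Complex.normSq (G z) : ℝ) : ℂ) := by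
    rw [G_conj hz, Complex.mul_conj]
  have hzne : (1 : ℂ) - z ≠ 0 := by
    intro h
    have : z = 1 := by linear_combination -h
    rw [this] at hz; simp at hz
  have h2 : (((Complex.normSq (G z) : ℝ) : ℂ))^2 = ((Complex.normSq (1-z) : ℝ) : ℂ)⁻¹ := by
    rw [← h1]
    have : (G z * G ((starRingEnd ℂ) z))^2 = (G z * G z) * (G ((starRingEnd ℂ) z) * G ((starRingEnd ℂ) z)) := by ring
    rw [this, G_sq hz, G_sq hz', ← Complex.mul_conj (1 - z)]
    rw [map_sub, map_one]
    rw [mul_inv]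
  have h2' : (Complex.normSq (G z))^2 = (Complex.normSq (1-z))⁻¹ := by
    have := h2
    rw [← Complex.ofReal_pow, ← Complex.ofReal_inv] at this
    exact_mod_cast this
  have hu : 0 < Complex.normSq (1-z) := Complex.normSq_pos.mpr hzne
  have hr : 0 ≤ Complex.normSq (G z) := Complex.normSq_nonneg _
  have : Complex.normSq (G z) = (Complex.normSq (1-z)) ^ (-(1/2 : ℝ)) := by
    have hs : Complex.normSq (G z) = Real.sqrt ((Complex.normSq (1-z))⁻¹) := by
      rw [← h2', Real.sqrt_sq hr]
    rw [hs, Real.sqrt_inv, Real.sqrt_eq_rpow, ← Real.rpow_neg hu.le]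
  rw [h1, this]

set_option maxHeartbeats 1000000 in
lemma key1 (θ : ℝ) {x : ℝ} (hx0 : 0 < x) (hx1 : x < 1) :
    HasSum (fun p : ℕ × ℕ =>
        bcoef p.1 * bcoef p.2 * x ^ (p.1 + p.2) * Real.cos (((p.1:ℝ) - (p.2:ℝ)) * θ))
      ((1 + x ^ 2 - 2 * x * Real.cos θ) ^ (-(1/2 : ℝ))) := by
  obtain ⟨z, hzdef⟩ : ∃ z : ℂ, z = (x:ℂ) * Complex.exp ((θ:ℝ) * Complex.I) := ⟨_, rfl⟩
  have hnz : ‖z‖ < 1 := by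
    rw [hzdef, norm_mul]
    rw [show ‖Complex.exp ((θ:ℝ) * Complex.I)‖ = 1 from Complex.norm_exp_ofReal_mul_I θ]
    rw [mul_one, Complex.norm_real, Real.norm_eq_abs, abs_of_pos hx0]
    exact hx1
  have hnz' : ‖(starRingEnd ℂ) z‖ < 1 := by rwa [RCLike.norm_conj]
  -- complex HasSum over pairs
  have hfg : Summable (fun p : ℕ × ℕ =>
      ((bcoef p.1 : ℂ) * z ^ p.1) * ((bcoef p.2 : ℂ) * ((starRingEnd ℂ) z) ^ p.2)) := by
    apply summable_mul_of_summable_norm (summable_norm_G hnz) (summable_norm_G hnz')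
  have hC := HasSum.mul (f := fun m : ℕ => (bcoef m : ℂ) * z ^ m)
      (g := fun m : ℕ => (bcoef m : ℂ) * ((starRingEnd ℂ) z) ^ m)
      (hasSum_G hnz) (hasSum_G hnz') hfg
  -- identify terms
  have hterm : ∀ p : ℕ × ℕ,
      ((bcoef p.1 : ℂ) * z ^ p.1) * ((bcoef p.2 : ℂ) * ((starRingEnd ℂ) z) ^ p.2)
      = ((bcoef p.1 * bcoef p.2 * x ^ (p.1 + p.2) : ℝ) : ℂ)
        * Complex.exp ((((p.1:ℝ) - (p.2:ℝ)) * θ : ℝ) * Complex.I) := by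
    rintro ⟨m, m'⟩
    have hconjz : (starRingEnd ℂ) z = (x:ℂ) * Complex.exp (((-θ:ℝ):ℂ) * Complex.I) := by
      rw [hzdef, map_mul, Complex.conj_ofReal, ← Complex.exp_conj]
      congr 1
      rw [map_mul, Complex.conj_ofReal, Complex.conj_I]
      push_cast
      ring
    have hzpow : z ^ m = (x:ℂ)^m * Complex.exp ((((m:ℝ) * θ : ℝ):ℂ) * Complex.I) := by
      rw [hzdef, mul_pow, ← Complex.exp_nat_mul]
      congr 2
      push_cast
      ring
    have hzpow' : ((starRingEnd ℂ) z) ^ m' =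
        (x:ℂ)^m' * Complex.exp (((-((m':ℝ) * θ) : ℝ):ℂ) * Complex.I) := by
      rw [hconjz, mul_pow, ← Complex.exp_nat_mul]
      congr 2
      push_cast
      ring
    rw [hzpow, hzpow']
    rw [show ((bcoef m:ℂ) * ((x:ℂ)^m * Complex.exp ((((m:ℝ) * θ : ℝ):ℂ) * Complex.I))) *
        ((bcoef m':ℂ) * ((x:ℂ)^m' * Complex.exp (((-((m':ℝ) * θ) : ℝ):ℂ) * Complex.I)))
        = ((bcoef m:ℂ) * (bcoef m':ℂ) * ((x:ℂ)^m * (x:ℂ)^m')) *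
          (Complex.exp ((((m:ℝ) * θ : ℝ):ℂ) * Complex.I) *
           Complex.exp (((-((m':ℝ) * θ) : ℝ):ℂ) * Complex.I)) from by ring]
    rw [← Complex.exp_add, ← pow_add]
    push_cast
    ring_nf
  -- take real parts
  have hRe := Complex.reCLM.hasSum hC
  have hre_term : ∀ p : ℕ × ℕ,
      Complex.reCLM (((bcoef p.1 : ℂ) * z ^ p.1) * ((bcoef p.2 : ℂ) * ((starRingEnd ℂ) z) ^ p.2))
      = bcoef p.1 * bcoef p.2 * x ^ (p.1 + p.2) * Real.cos (((p.1:ℝ) - (p.2:ℝ)) * θ) := by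
    intro p
    rw [hterm p]
    simp only [Complex.reCLM_apply, Complex.mul_re, Complex.ofReal_re, Complex.ofReal_im,
      Complex.exp_ofReal_mul_I_re, Complex.exp_ofReal_mul_I_im]
    ring
  have hre_val : Complex.reCLM (G z * G ((starRingEnd ℂ) z))
      = (1 + x ^ 2 - 2 * x * Real.cos θ) ^ (-(1/2 : ℝ)) := by
    rw [G_mul_G_conj hnz]
    simp only [Complex.reCLM_apply, Complex.ofReal_re]
    congr 1
    -- normSq (1 - z) = 1 + x² - 2x cos θ
    have hre : (1 - z).re = 1 - x * Real.cos θ := by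
      rw [hzdef]
      simp [Complex.sub_re, Complex.mul_re, Complex.exp_ofReal_mul_I_re,
        Complex.exp_ofReal_mul_I_im]
    have him : (1 - z).im = -(x * Real.sin θ) := by
      rw [hzdef]
      simp [Complex.sub_im, Complex.mul_im, Complex.exp_ofReal_mul_I_re,
        Complex.exp_ofReal_mul_I_im]
    rw [Complex.normSq_apply, hre, him]
    have := Real.sin_sq_add_cos_sq θ
    ring_nf
    nlinarith [this]
  rw [← hre_val]
  -- transfer HasSum through re
  have : (fun p : ℕ × ℕ => bcoef p.1 * bcoef p.2 * x ^ (p.1 + p.2)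
      * Real.cos (((p.1:ℝ) - (p.2:ℝ)) * θ))
      = fun p : ℕ × ℕ => Complex.reCLM (((bcoef p.1 : ℂ) * z ^ p.1) *
          ((bcoef p.2 : ℂ) * ((starRingEnd ℂ) z) ^ p.2)) := by
    funext p
    rw [hre_term p]
  rw [this]
  exact hRe

lemma key2 {ℓ : ℕ} (hℓ : 2 ≤ ℓ) (j : ℤ) :
    ∑ k ∈ Finset.range ℓ, Real.cos ((j:ℝ) * theta ℓ k)
      = if (ℓ:ℤ) ∣ j then (ℓ:ℝ) else 0 := by
  have hℓ0 : (ℓ:ℝ) ≠ 0 := by positivity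
  obtain ⟨ζ, hζ⟩ : ∃ ζ : ℂ, ζ = Complex.exp (((2 * Real.pi * j / ℓ : ℝ) : ℂ) * Complex.I) :=
    ⟨_, rfl⟩
  have hpow : ∀ k : ℕ, ζ ^ k = Complex.exp (((j:ℝ) * theta ℓ k : ℝ) * Complex.I) := by
    intro k
    rw [hζ, ← Complex.exp_nat_mul]
    congr 1
    push_cast [theta]
    ring
  have hre : ∀ k : ℕ, Real.cos ((j:ℝ) * theta ℓ k) = (ζ ^ k).re := by
    intro k
    rw [hpow k, Complex.exp_ofReal_mul_I_re]
  have hsum : ∑ k ∈ Finset.range ℓ, Real.cos ((j:ℝ) * theta ℓ k)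
      = (∑ k ∈ Finset.range ℓ, ζ ^ k).re := by
    rw [Complex.re_sum]
    exact Finset.sum_congr rfl fun k _ => hre k
  rw [hsum]
  by_cases hdvd : (ℓ:ℤ) ∣ j
  · obtain ⟨n, hn⟩ := hdvd
    have hζ1 : ζ = 1 := by
      rw [hζ]
      have : ((2 * Real.pi * j / ℓ : ℝ) : ℂ) * Complex.I = (n:ℂ) * (2 * Real.pi * Complex.I) := by
        have : (j:ℝ) = (ℓ:ℝ) * (n:ℝ) := by exact_mod_cast congrArg (Int.cast : ℤ → ℝ) hn
        have hℓC : (ℓ:ℂ) ≠ 0 := by exact_mod_cast hℓ0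
        push_cast [this]
        field_simp
      rw [this]
      exact_mod_cast Complex.exp_int_mul_two_pi_mul_I n
    have hdvd' : (ℓ:ℤ) ∣ j := ⟨n, hn⟩
    simp [hζ1, hdvd']
  · have hζ1 : ζ ≠ 1 := by
      rw [hζ]
      intro h
      rw [Complex.exp_eq_one_iff] at h
      obtain ⟨n, hn⟩ := h
      have hI : ((2 * Real.pi * j / ℓ : ℝ) : ℂ) = (n:ℂ) * (2 * Real.pi) := by
        have h2 : ((n:ℂ) * (2 * Real.pi * Complex.I)) = ((n:ℂ) * (2 * Real.pi)) * Complex.I := by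
          ring
        rw [h2] at hn
        exact mul_right_cancel₀ Complex.I_ne_zero hn
      have : (2 * Real.pi * j / ℓ : ℝ) = n * (2 * Real.pi) := by exact_mod_cast hI
      have hj : (j:ℝ) = (n:ℝ) * ℓ := by
        field_simp at this
        nlinarith [Real.pi_pos, this]
      have : j = n * ℓ := by exact_mod_cast hj
      exact hdvd ⟨n, by linarith [this]⟩
    have hζℓ : ζ ^ ℓ = 1 := by
      rw [hζ, ← Complex.exp_nat_mul]
      have : (ℓ:ℂ) * (((2 * Real.pi * j / ℓ : ℝ) : ℂ) * Complex.I)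
          = (j:ℂ) * (2 * Real.pi * Complex.I) := by
        push_cast
        have : (ℓ:ℂ) ≠ 0 := by exact_mod_cast hℓ0
        field_simp
      rw [this]
      exact_mod_cast Complex.exp_int_mul_two_pi_mul_I j
    rw [geom_sum_eq hζ1, hζℓ]
    simp [hdvd]

noncomputable def ccoef (ℓ : ℕ) (p : ℕ × ℕ) : ℝ :=
  (if (ℓ:ℤ) ∣ ((p.1:ℤ) - (p.2:ℤ)) then (ℓ:ℝ) else 0) * (bcoef p.1 * bcoef p.2)

lemma key3 {ℓ : ℕ} (hℓ : 2 ≤ ℓ) {x : ℝ} (hx0 : 0 < x) (hx1 : x < 1) :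
    HasSum (fun p : ℕ × ℕ => ccoef ℓ p * x ^ (p.1 + p.2)) (phi ℓ 1 x) := by
  have h1 : ∀ k ∈ Finset.range ℓ, HasSum
      (fun p : ℕ × ℕ => bcoef p.1 * bcoef p.2 * x ^ (p.1 + p.2)
        * Real.cos (((p.1:ℝ) - (p.2:ℝ)) * theta ℓ k))
      ((1 + x ^ 2 - 2 * x * Real.cos (theta ℓ k)) ^ (-(1/2 : ℝ))) :=
    fun k _ => key1 (theta ℓ k) hx0 hx1
  have h2 := hasSum_sum h1
  have hphi : phi ℓ 1 x = ∑ k ∈ Finset.range ℓ,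
      (1 + x ^ 2 - 2 * x * Real.cos (theta ℓ k)) ^ (-(1/2 : ℝ)) := by
    unfold phi
    norm_num
  rw [hphi]
  have hfun : ∀ p : ℕ × ℕ, (∑ k ∈ Finset.range ℓ,
      bcoef p.1 * bcoef p.2 * x ^ (p.1 + p.2) * Real.cos (((p.1:ℝ) - (p.2:ℝ)) * theta ℓ k))
      = ccoef ℓ p * x ^ (p.1 + p.2) := by
    intro p
    rw [← Finset.mul_sum]
    have hk2 := key2 hℓ ((p.1:ℤ) - (p.2:ℤ))
    push_cast at hk2
    rw [hk2]
    unfold ccoef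
    push_cast
    ring
  exact (funext hfun : _) ▸ h2

end ComplexSeries

lemma ccoef_nonneg (ℓ : ℕ) (p : ℕ × ℕ) : 0 ≤ ccoef ℓ p := by
  unfold ccoef
  have := (bcoef_pos p.1).le
  have := (bcoef_pos p.2).le
  have : (0:ℝ) ≤ if (ℓ:ℤ) ∣ ((p.1:ℤ) - (p.2:ℤ)) then (ℓ:ℝ) else 0 := by positivity
  positivity

lemma ccoef_le (ℓ : ℕ) (p : ℕ × ℕ) : ccoef ℓ p ≤ ℓ := by
  unfold ccoef
  have h1 := bcoef_pos p.1
  have h2 := bcoef_pos p.2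
  have h3 := bcoef_le_one p.1
  have h4 := bcoef_le_one p.2
  have hb : bcoef p.1 * bcoef p.2 ≤ 1 := by nlinarith
  have hbnn : 0 ≤ bcoef p.1 * bcoef p.2 := by positivity
  split
  · nlinarith [Nat.cast_nonneg (α := ℝ) ℓ]
  · rw [zero_mul]
    positivity

/-- `ccoef` vanishes on total degree 1. -/
lemma ccoef_deg_one {ℓ : ℕ} (hℓ : 2 ≤ ℓ) (p : ℕ × ℕ) (hp : p.1 + p.2 = 1) :
    ccoef ℓ p = 0 := by
  unfold ccoef
  have : ¬ (ℓ:ℤ) ∣ ((p.1:ℤ) - (p.2:ℤ)) := by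
    intro h
    have hd : ((p.1:ℤ) - (p.2:ℤ)) = 1 ∨ ((p.1:ℤ) - (p.2:ℤ)) = -1 := by
      rcases p with ⟨a, b⟩
      simp only at hp ⊢
      omega
    have h1 : (ℓ:ℤ) ∣ 1 := by
      rcases hd with hd | hd
      · rwa [hd] at h
      · rw [hd] at h
        exact (dvd_neg).mp h
    have := Int.le_of_dvd one_pos h1
    omega
  rw [if_neg this, zero_mul]

lemma master_summable {r : ℝ} (h0 : 0 ≤ r) (h1 : r < 1) :
    Summable (fun p : ℕ × ℕ => (((p.1 + p.2 : ℕ):ℝ) + 2)^3 * r ^ (p.1 + p.2)) := by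
  have hone : Summable (fun m : ℕ => (((m:ℕ):ℝ) + 2)^3 * r ^ m) := by
    have hr : ‖r‖ < 1 := by rwa [Real.norm_eq_abs, abs_of_nonneg h0]
    have h3 := summable_pow_mul_geometric_of_norm_lt_one (R := ℝ) 3 hr
    have h2 := summable_pow_mul_geometric_of_norm_lt_one (R := ℝ) 2 hr
    have hh1 := summable_pow_mul_geometric_of_norm_lt_one (R := ℝ) 1 hr
    have hh0 := summable_pow_mul_geometric_of_norm_lt_one (R := ℝ) 0 hr
    have hsum := h3.add ((h2.mul_left 6).add ((hh1.mul_left 12).add (hh0.mul_left 8)))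
    have hfe : (fun m : ℕ => (((m:ℕ):ℝ) + 2)^3 * r ^ m)
        = fun m : ℕ => (m:ℝ)^3 * r^m + (6 * ((m:ℝ)^2 * r^m)
          + (12 * ((m:ℝ)^1 * r^m) + 8 * ((m:ℝ)^0 * r^m))) := by
      funext m; ring
    rw [hfe]
    exact hsum
  have hprod := hone.mul_of_nonneg hone (fun m => by positivity) (fun m => by positivity)
  apply Summable.of_nonneg_of_le (fun p => by positivity) _ hprod
  rintro ⟨m, m'⟩
  simp only
  have hbase : ((m + m' : ℕ):ℝ) + 2 ≤ (((m:ℕ):ℝ)+2) * (((m':ℕ):ℝ)+2) := by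
    push_cast
    nlinarith [Nat.cast_nonneg (α := ℝ) m, Nat.cast_nonneg (α := ℝ) m']
  have hcube : (((m + m' : ℕ):ℝ) + 2)^3 ≤ ((((m:ℕ):ℝ)+2) * (((m':ℕ):ℝ)+2))^3 := by
    apply pow_le_pow_left₀ (by positivity) hbase
  calc (((m + m' : ℕ):ℝ) + 2)^3 * r ^ (m + m')
      ≤ ((((m:ℕ):ℝ)+2) * (((m':ℕ):ℝ)+2))^3 * r ^ (m + m') := by
        apply mul_le_mul_of_nonneg_right hcube (by positivity)
    _ = (((m:ℕ):ℝ)+2)^3 * r^m * ((((m':ℕ):ℝ)+2)^3 * r^m') := by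
        rw [pow_add]; ring

lemma pow_nat_sub_le {r : ℝ} (h0 : 0 < r) (h1 : r < 1) (N j : ℕ) :
    r ^ (N - j) ≤ r ^ N / r ^ j := by
  rw [le_div_iff₀ (by positivity), ← pow_add]
  exact pow_le_pow_of_le_one h0.le h1.le (by omega)

lemma summable_of_le_master {r : ℝ} (h0 : 0 < r) (h1 : r < 1) {f : ℕ × ℕ → ℝ} {C : ℝ}
    (hf : ∀ p : ℕ × ℕ, |f p| ≤ C * ((((p.1 + p.2 : ℕ):ℝ) + 2)^3 * r ^ (p.1 + p.2))) :
    Summable f := by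
  apply Summable.of_norm_bounded ((master_summable h0.le h1).mul_left C)
  intro p
  rw [Real.norm_eq_abs]
  exact hf p

/-- First-derivative series. -/
noncomputable def D1 (ℓ : ℕ) (y : ℝ) : ℝ :=
  ∑' p : ℕ × ℕ, ccoef ℓ p * (((p.1 + p.2 : ℕ):ℝ) * y ^ (p.1 + p.2 - 1))

/-- Second-derivative series. -/
noncomputable def D2 (ℓ : ℕ) (y : ℝ) : ℝ :=
  ∑' p : ℕ × ℕ, ccoef ℓ p * ((p.1 + p.2 : ℕ):ℝ) * (((p.1 + p.2 - 1 : ℕ):ℝ) * y ^ (p.1 + p.2 - 2))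

section derivs
variable {ℓ : ℕ} (hℓ : 2 ≤ ℓ)

lemma bound1 {ℓ : ℕ} {r : ℝ} (h0 : 0 < r) (h1 : r < 1) (p : ℕ × ℕ) {y : ℝ} (hy : |y| ≤ r) :
    |ccoef ℓ p * (((p.1 + p.2 : ℕ):ℝ) * y ^ (p.1 + p.2 - 1))|
      ≤ ((ℓ:ℝ)/r) * ((((p.1 + p.2 : ℕ):ℝ) + 2)^3 * r ^ (p.1 + p.2)) := by
  set N := p.1 + p.2 with hN
  have hc0 := ccoef_nonneg ℓ p
  have hcl := ccoef_le ℓ p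
  have hyp : |y ^ (N - 1)| ≤ r ^ (N - 1) := by
    rw [abs_pow]
    exact pow_le_pow_left₀ (abs_nonneg y) hy _
  have hrp : r ^ (N - 1) ≤ r ^ N / r := by
    have := pow_nat_sub_le h0 h1 N 1
    rwa [pow_one] at this
  rw [abs_mul, abs_mul, abs_of_nonneg hc0, abs_of_nonneg (Nat.cast_nonneg _)]
  have hNle : ((N:ℕ):ℝ) ≤ (((N:ℕ):ℝ) + 2)^3 := by
    have h1' : (0:ℝ) ≤ (N:ℝ) := Nat.cast_nonneg _
    nlinarith [mul_nonneg h1' h1', mul_nonneg (mul_nonneg h1' h1') h1']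
  calc ccoef ℓ p * (((N:ℕ):ℝ) * |y ^ (N-1)|)
      ≤ (ℓ:ℝ) * (((N:ℕ):ℝ) * (r ^ N / r)) := by
        apply mul_le_mul hcl _ (by positivity) (Nat.cast_nonneg _)
        exact mul_le_mul_of_nonneg_left (le_trans hyp hrp) (Nat.cast_nonneg _)
    _ ≤ (ℓ:ℝ) * ((((N:ℕ):ℝ) + 2)^3 * (r ^ N / r)) := by
        apply mul_le_mul_of_nonneg_left _ (Nat.cast_nonneg _)
        apply mul_le_mul_of_nonneg_right hNle (by positivity)
    _ = ((ℓ:ℝ)/r) * ((((N:ℕ):ℝ) + 2)^3 * r ^ N) := by ring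

lemma bound2 {ℓ : ℕ} {r : ℝ} (h0 : 0 < r) (h1 : r < 1) (p : ℕ × ℕ) {y : ℝ} (hy : |y| ≤ r) :
    |ccoef ℓ p * ((p.1 + p.2 : ℕ):ℝ) * (((p.1 + p.2 - 1 : ℕ):ℝ) * y ^ (p.1 + p.2 - 2))|
      ≤ ((ℓ:ℝ)/r^2) * ((((p.1 + p.2 : ℕ):ℝ) + 2)^3 * r ^ (p.1 + p.2)) := by
  set N := p.1 + p.2 with hN
  have hc0 := ccoef_nonneg ℓ p
  have hcl := ccoef_le ℓ p
  have hyp : |y ^ (N - 2)| ≤ r ^ (N - 2) := by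
    rw [abs_pow]
    exact pow_le_pow_left₀ (abs_nonneg y) hy _
  have hrp : r ^ (N - 2) ≤ r ^ N / r ^ 2 := pow_nat_sub_le h0 h1 N 2
  rw [abs_mul, abs_mul, abs_mul, abs_of_nonneg hc0,
    abs_of_nonneg (Nat.cast_nonneg (N:ℕ)), abs_of_nonneg (Nat.cast_nonneg (N-1:ℕ))]
  have hNle : ((N:ℕ):ℝ) * ((N-1:ℕ):ℝ) ≤ (((N:ℕ):ℝ) + 2)^3 := by
    have h1' : (0:ℝ) ≤ ((N:ℕ):ℝ) := Nat.cast_nonneg _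
    have h2' : ((N-1:ℕ):ℝ) ≤ ((N:ℕ):ℝ) := by
      exact_mod_cast Nat.cast_le.mpr (Nat.sub_le N 1)
    have h3' : (0:ℝ) ≤ ((N-1:ℕ):ℝ) := Nat.cast_nonneg _
    calc ((N:ℕ):ℝ) * ((N-1:ℕ):ℝ) ≤ ((N:ℕ):ℝ) * ((N:ℕ):ℝ) :=
          mul_le_mul_of_nonneg_left h2' h1'
      _ ≤ (((N:ℕ):ℝ) + 2)^3 := by nlinarith [mul_nonneg h1' h1', mul_nonneg (mul_nonneg h1' h1') h1']
  have hY : |y ^ (N-2)| ≤ r ^ N / r^2 := hyp.trans hrp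
  calc ccoef ℓ p * ((N:ℕ):ℝ) * (((N-1:ℕ):ℝ) * |y ^ (N-2)|)
      = ccoef ℓ p * ((((N:ℕ):ℝ) * ((N-1:ℕ):ℝ)) * |y ^ (N-2)|) := by ring
    _ ≤ (ℓ:ℝ) * ((((N:ℕ):ℝ) * ((N-1:ℕ):ℝ)) * |y ^ (N-2)|) := by
        apply mul_le_mul_of_nonneg_right hcl
        positivity
    _ ≤ (ℓ:ℝ) * ((((N:ℕ):ℝ) + 2)^3 * |y ^ (N-2)|) := by
        apply mul_le_mul_of_nonneg_left _ (Nat.cast_nonneg _)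
        exact mul_le_mul_of_nonneg_right hNle (abs_nonneg _)
    _ ≤ (ℓ:ℝ) * ((((N:ℕ):ℝ) + 2)^3 * (r ^ N / r^2)) := by
        apply mul_le_mul_of_nonneg_left _ (Nat.cast_nonneg _)
        exact mul_le_mul_of_nonneg_left hY (by positivity)
    _ = ((ℓ:ℝ)/r^2) * ((((N:ℕ):ℝ) + 2)^3 * r ^ N) := by ring

lemma phi_hasDeriv {ℓ : ℕ} (hℓ : 2 ≤ ℓ) {x : ℝ} (hx0 : 0 < x) (hx1 : x < 1) :
    HasDerivAt (phi ℓ 1) (D1 ℓ x) x := by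
  set r : ℝ := (1 + x)/2 with hr
  have hr0 : 0 < r := by rw [hr]; linarith
  have hr1 : r < 1 := by rw [hr]; linarith
  have hxr : x < r := by rw [hr]; linarith
  have hmem : x ∈ Set.Ioo (-r) r := ⟨by linarith, hxr⟩
  have ht : IsOpen (Set.Ioo (-r) r) := isOpen_Ioo
  have ht' : IsPreconnected (Set.Ioo (-r) r) := (convex_Ioo _ _).isPreconnected
  have hder : HasDerivAt (fun z => ∑' p : ℕ × ℕ, ccoef ℓ p * z ^ (p.1 + p.2))
      (∑' p : ℕ × ℕ, ccoef ℓ p * (((p.1 + p.2 : ℕ):ℝ) * x ^ (p.1 + p.2 - 1))) x := by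
    apply hasDerivAt_tsum_of_isPreconnected
      (((master_summable hr0.le hr1).mul_left ((ℓ:ℝ)/r))) ht ht'
      (fun p y _ => (hasDerivAt_pow (p.1+p.2) y).const_mul (ccoef ℓ p))
      (fun p y hy => ?_) hmem (key3 hℓ hx0 hx1).summable hmem
    rw [Real.norm_eq_abs]
    have hyr : |y| ≤ r := by
      rw [abs_le]
      exact ⟨hy.1.le, hy.2.le⟩
    exact bound1 hr0 hr1 p hyr
  have hev : phi ℓ 1 =ᶠ[nhds x] (fun z => ∑' p : ℕ × ℕ, ccoef ℓ p * z ^ (p.1 + p.2)) := by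
    apply Filter.eventuallyEq_of_mem (Ioo_mem_nhds hx0 hx1)
    intro y hy
    exact ((key3 hℓ hy.1 hy.2).tsum_eq).symm
  exact hder.congr_of_eventuallyEq hev

lemma term_hasDeriv (ℓ : ℕ) (p : ℕ × ℕ) (y : ℝ) :
    HasDerivAt (fun z : ℝ => ccoef ℓ p * (((p.1 + p.2 : ℕ):ℝ) * z ^ (p.1 + p.2 - 1)))
      (ccoef ℓ p * ((p.1 + p.2 : ℕ):ℝ) * (((p.1 + p.2 - 1 : ℕ):ℝ) * y ^ (p.1 + p.2 - 2))) y := by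
  have h0 := (hasDerivAt_pow (p.1 + p.2 - 1) y).const_mul (ccoef ℓ p * ((p.1 + p.2 : ℕ):ℝ))
  have he : p.1 + p.2 - 1 - 1 = p.1 + p.2 - 2 := by omega
  rw [he] at h0
  have hfun : (fun z : ℝ => ccoef ℓ p * ((p.1 + p.2 : ℕ):ℝ) * z ^ (p.1 + p.2 - 1))
      = fun z : ℝ => ccoef ℓ p * (((p.1 + p.2 : ℕ):ℝ) * z ^ (p.1 + p.2 - 1)) := by
    funext z; ring
  rw [hfun] at h0
  exact h0

lemma D1_hasDeriv {ℓ : ℕ} (hℓ : 2 ≤ ℓ) {x : ℝ} (hx0 : 0 < x) (hx1 : x < 1) :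
    HasDerivAt (D1 ℓ) (D2 ℓ x) x := by
  set r : ℝ := (1 + x)/2 with hr
  have hr0 : 0 < r := by rw [hr]; linarith
  have hr1 : r < 1 := by rw [hr]; linarith
  have hxr : x < r := by rw [hr]; linarith
  have hmem : x ∈ Set.Ioo (-r) r := ⟨by linarith, hxr⟩
  have ht : IsOpen (Set.Ioo (-r) r) := isOpen_Ioo
  have ht' : IsPreconnected (Set.Ioo (-r) r) := (convex_Ioo _ _).isPreconnected
  have hS1 : Summable (fun p : ℕ × ℕ =>
      ccoef ℓ p * (((p.1 + p.2 : ℕ):ℝ) * x ^ (p.1 + p.2 - 1))) := by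
    apply summable_of_le_master hx0 hx1 (C := (ℓ:ℝ)/x)
    intro p
    exact bound1 hx0 hx1 p (le_of_eq (abs_of_pos hx0))
  exact hasDerivAt_tsum_of_isPreconnected
    (((master_summable hr0.le hr1).mul_left ((ℓ:ℝ)/r^2))) ht ht'
    (fun p y _ => term_hasDeriv ℓ p y)
    (fun p y hy => by
      rw [Real.norm_eq_abs]
      exact bound2 hr0 hr1 p (abs_le.mpr ⟨hy.1.le, hy.2.le⟩)) hmem hS1 hmem

/-- For every `x ∈ (0,1)`, `x·φ₁''(x) − φ₁'(x) > 0`. -/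
theorem x_phi_second_sub_phi_first_pos (ℓ : ℕ) (hℓ : 2 ≤ ℓ) (x : ℝ)
    (hx : x ∈ Set.Ioo (0 : ℝ) 1) :
    0 < x * deriv (deriv (phi ℓ 1)) x - deriv (phi ℓ 1) x := by
  obtain ⟨hx0, hx1⟩ := hx
  have hD1 : ∀ y ∈ Set.Ioo (0:ℝ) 1, deriv (phi ℓ 1) y = D1 ℓ y :=
    fun y hy => (phi_hasDeriv hℓ hy.1 hy.2).deriv
  have hev : deriv (phi ℓ 1) =ᶠ[nhds x] D1 ℓ :=
    Filter.eventuallyEq_of_mem (Ioo_mem_nhds hx0 hx1) hD1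
  have h2 : deriv (deriv (phi ℓ 1)) x = D2 ℓ x := by
    rw [hev.deriv_eq]
    exact (D1_hasDeriv hℓ hx0 hx1).deriv
  rw [h2, hD1 x ⟨hx0, hx1⟩]
  unfold D1 D2
  have S1 : Summable (fun p : ℕ × ℕ =>
      ccoef ℓ p * (((p.1 + p.2 : ℕ):ℝ) * x ^ (p.1 + p.2 - 1))) := by
    apply summable_of_le_master hx0 hx1 (C := (ℓ:ℝ)/x)
    intro p
    exact bound1 hx0 hx1 p (le_of_eq (abs_of_pos hx0))
  have S2 : Summable (fun p : ℕ × ℕ =>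
      ccoef ℓ p * ((p.1 + p.2 : ℕ):ℝ) * (((p.1 + p.2 - 1 : ℕ):ℝ) * x ^ (p.1 + p.2 - 2))) := by
    apply summable_of_le_master hx0 hx1 (C := (ℓ:ℝ)/x^2)
    intro p
    exact bound2 hx0 hx1 p (le_of_eq (abs_of_pos hx0))
  have hxD2 : x * ∑' p : ℕ × ℕ,
      ccoef ℓ p * ((p.1 + p.2 : ℕ):ℝ) * (((p.1 + p.2 - 1 : ℕ):ℝ) * x ^ (p.1 + p.2 - 2))
      = ∑' p : ℕ × ℕ, x * (ccoef ℓ p * ((p.1 + p.2 : ℕ):ℝ)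
          * (((p.1 + p.2 - 1 : ℕ):ℝ) * x ^ (p.1 + p.2 - 2))) := (tsum_mul_left).symm
  rw [hxD2, ← Summable.tsum_sub (S2.mul_left x) S1]
  apply Summable.tsum_pos ((S2.mul_left x).sub S1) ?_ ((2,2) : ℕ × ℕ)
  · -- positivity of the (2,2) term
    have hc : 0 < ccoef ℓ (2,2) := by
      unfold ccoef
      simp only [Nat.cast_ofNat, sub_self, dvd_zero, if_true]
      have := bcoef_pos 2
      have hl0 : (0:ℝ) < (ℓ:ℝ) := by
        have : (0:ℕ) < ℓ := by omega
        exact_mod_cast this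
      positivity
    show (0:ℝ) < x * (ccoef ℓ (2,2) * ((2 + 2 : ℕ):ℝ)
        * (((2 + 2 - 1 : ℕ):ℝ) * x ^ (2 + 2 - 2)))
      - ccoef ℓ (2,2) * (((2 + 2 : ℕ):ℝ) * x ^ (2 + 2 - 1))
    norm_num
    nlinarith [pow_pos hx0 3, pow_pos hx0 2, hc, sq_nonneg x]
  · -- nonnegativity of all terms
    intro p
    by_cases hN0 : p.1 + p.2 = 0
    · simp [hN0]
    by_cases hN1 : p.1 + p.2 = 1
    · simp [ccoef_deg_one hℓ p hN1]
    obtain ⟨M, hM⟩ : ∃ M, p.1 + p.2 = M + 2 := ⟨p.1 + p.2 - 2, by omega⟩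
    rw [hM]
    simp only [Nat.add_sub_cancel]
    have hM1 : M + 2 - 1 = M + 1 := by omega
    rw [hM1]
    have hkey : x * (ccoef ℓ p * ((M + 2 : ℕ):ℝ) * (((M + 1 : ℕ):ℝ) * x ^ M))
        - ccoef ℓ p * (((M + 2 : ℕ):ℝ) * x ^ (M + 1))
        = ccoef ℓ p * ((M + 2 : ℕ):ℝ) * (M:ℝ) * (x ^ M * x) := by
      rw [pow_succ]
      push_cast
      ring
    rw [hkey]
    have := ccoef_nonneg ℓ p
    positivity
end derivs
end

section
/- For every x ∈ (0,1) one has the identity (1 − x)·φ₁''(x) − 2·φ₁'(x) = h_ℓ(x). Moreover, h_ℓ(x) > 0 for every x > 1. -/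
open Real BigOperators Finset

/-- `h_ℓ(x) = Σ_{k=1}^{ℓ-1} (1-cos θ_k)(2x² + x(3-cos θ_k) - 1 - 3cos θ_k) /
(1 + x² - 2x cos θ_k)^{5/2}`. -/
noncomputable def hEll (ℓ : ℕ) (x : ℝ) : ℝ :=
  ∑ k ∈ Finset.Ico 1 ℓ, (1 - Real.cos (theta ℓ k)) *
    (2 * x ^ 2 + x * (3 - Real.cos (theta ℓ k)) - 1 - 3 * Real.cos (theta ℓ k)) /
      (1 + x ^ 2 - 2 * x * Real.cos (theta ℓ k)) ^ ((5 : ℝ) / 2)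

/-- Positivity of `1 + x² - 2x cos θ` for `x > 0`, `x ≠ 1`, `cos θ ≤ 1`. -/
lemma Q_pos_aux {x c : ℝ} (hx : 0 < x) (hx1 : x ≠ 1) (hc : c ≤ 1) :
    0 < 1 + x ^ 2 - 2 * x * c := by
  have hne : x - 1 ≠ 0 := sub_ne_zero.mpr hx1
  have h2 : 0 < (x - 1) ^ 2 := lt_of_le_of_ne (sq_nonneg _) (Ne.symm (pow_ne_zero 2 hne))
  nlinarith [mul_nonneg hx.le (sub_nonneg.mpr hc)]

/-- First-derivative candidate of `φ₁`. -/
noncomputable def g1 (ℓ : ℕ) (x : ℝ) : ℝ :=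
  ∑ k ∈ Finset.range ℓ,
    -((x - Real.cos (theta ℓ k)) *
      (1 + x ^ 2 - 2 * x * Real.cos (theta ℓ k)) ^ ((-3 : ℝ) / 2))

/-- Second-derivative candidate of `φ₁`. -/
noncomputable def g2 (ℓ : ℕ) (x : ℝ) : ℝ :=
  ∑ k ∈ Finset.range ℓ,
    (3 * (x - Real.cos (theta ℓ k)) ^ 2 *
        (1 + x ^ 2 - 2 * x * Real.cos (theta ℓ k)) ^ ((-5 : ℝ) / 2) -
      (1 + x ^ 2 - 2 * x * Real.cos (theta ℓ k)) ^ ((-3 : ℝ) / 2))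

lemma hasDerivAt_Q (c x : ℝ) :
    HasDerivAt (fun y : ℝ => 1 + y ^ 2 - 2 * y * c) (2 * x - 2 * c) x := by
  have h1 : HasDerivAt (fun y : ℝ => y ^ 2) (2 * x) x := by
    simpa using hasDerivAt_pow 2 x
  have h2 : HasDerivAt (fun y : ℝ => 2 * y * c) (2 * c) x := by
    simpa using ((hasDerivAt_id x).const_mul 2).mul_const c
  exact (h1.const_add 1).sub h2

lemma hasDerivAt_phi1 (ℓ : ℕ) {x : ℝ} (hx : 0 < x) (hx1 : x ≠ 1) :
    HasDerivAt (phi ℓ 1) (g1 ℓ x) x := by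
  unfold phi g1
  apply HasDerivAt.fun_sum
  intro k _
  set c := Real.cos (theta ℓ k) with hc
  have hQ : 0 < 1 + x ^ 2 - 2 * x * c := Q_pos_aux hx hx1 (Real.cos_le_one _)
  have h := (hasDerivAt_Q c x).rpow_const (p := -((1 : ℝ) / 2)) (Or.inl (ne_of_gt hQ))
  refine h.congr_deriv ?_
  rw [show (-((1 : ℝ) / 2) - 1) = (-3 : ℝ) / 2 by norm_num]
  ring

lemma hasDerivAt_g1 (ℓ : ℕ) {x : ℝ} (hx : 0 < x) (hx1 : x ≠ 1) :
    HasDerivAt (g1 ℓ) (g2 ℓ x) x := by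
  unfold g1 g2
  apply HasDerivAt.fun_sum
  intro k _
  set c := Real.cos (theta ℓ k) with hc
  have hQ : 0 < 1 + x ^ 2 - 2 * x * c := Q_pos_aux hx hx1 (Real.cos_le_one _)
  have hrpow := (hasDerivAt_Q c x).rpow_const (p := (-3 : ℝ) / 2) (Or.inl (ne_of_gt hQ))
  have h := (((hasDerivAt_id x).sub_const c).fun_mul hrpow).fun_neg
  refine h.congr_deriv ?_
  rw [show ((-3 : ℝ) / 2 - 1) = (-5 : ℝ) / 2 by norm_num]
  simp only [id_eq]
  ring

/-- The key per-term algebraic identity. -/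
lemma key_term (c x : ℝ) (hQ : 0 < 1 + x ^ 2 - 2 * x * c) :
    (1 - x) * (3 * (x - c) ^ 2 * (1 + x ^ 2 - 2 * x * c) ^ ((-5 : ℝ) / 2) -
        (1 + x ^ 2 - 2 * x * c) ^ ((-3 : ℝ) / 2)) -
      2 * (-((x - c) * (1 + x ^ 2 - 2 * x * c) ^ ((-3 : ℝ) / 2))) =
    (1 - c) * (2 * x ^ 2 + x * (3 - c) - 1 - 3 * c) /
      (1 + x ^ 2 - 2 * x * c) ^ ((5 : ℝ) / 2) := by
  have h3 : (1 + x ^ 2 - 2 * x * c) ^ ((-3 : ℝ) / 2) =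
      (1 + x ^ 2 - 2 * x * c) * (1 + x ^ 2 - 2 * x * c) ^ ((-5 : ℝ) / 2) := by
    rw [show ((-3 : ℝ) / 2) = 1 + (-5 : ℝ) / 2 by norm_num, Real.rpow_add hQ, Real.rpow_one]
  have h5 : (1 + x ^ 2 - 2 * x * c) ^ ((-5 : ℝ) / 2) =
      ((1 + x ^ 2 - 2 * x * c) ^ ((5 : ℝ) / 2))⁻¹ := by
    rw [show ((-5 : ℝ) / 2) = -((5 : ℝ) / 2) by norm_num, Real.rpow_neg hQ.le]
  have hP : (0 : ℝ) < (1 + x ^ 2 - 2 * x * c) ^ ((5 : ℝ) / 2) := Real.rpow_pos_of_pos hQ _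
  rw [h3, h5]
  field_simp
  ring

lemma cos_theta_lt_one (ℓ k : ℕ) (h1 : 1 ≤ k) (h2 : k < ℓ) : Real.cos (theta ℓ k) < 1 := by
  have hπ : (0 : ℝ) < Real.pi := Real.pi_pos
  have hℓ0 : 0 < ℓ := by omega
  have hℓ : (0 : ℝ) < ℓ := by exact_mod_cast hℓ0
  have hk : (0 : ℝ) < k := by exact_mod_cast h1
  have hθpos : 0 < theta ℓ k := by
    unfold theta; positivity
  have hθlt : theta ℓ k < 2 * Real.pi := by
    unfold theta
    rw [div_lt_iff₀ hℓ]
    have : (k : ℝ) < ℓ := by exact_mod_cast h2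
    nlinarith
  refine lt_of_le_of_ne (Real.cos_le_one _) (fun h => ?_)
  have := (Real.cos_eq_one_iff_of_lt_of_lt (by linarith) hθlt).mp h
  linarith

/-- On `(0,1)` one has `(1 − x)·φ₁''(x) − 2φ₁'(x) = h_ℓ(x)`; moreover `h_ℓ(x) > 0` for all
`x > 1`. -/
theorem hEll_identity_and_pos (ℓ : ℕ) (hℓ : 2 ≤ ℓ) :
    (∀ x ∈ Set.Ioo (0 : ℝ) 1,
      (1 - x) * deriv (deriv (phi ℓ 1)) x - 2 * deriv (phi ℓ 1) x = hEll ℓ x) ∧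
    (∀ x : ℝ, 1 < x → 0 < hEll ℓ x) := by
  constructor
  · intro x hx
    obtain ⟨hx0, hx1⟩ := hx
    have hxne : x ≠ 1 := ne_of_lt hx1
    -- deriv (phi ℓ 1) = g1 ℓ on a neighborhood of x
    have hEq : deriv (phi ℓ 1) =ᶠ[nhds x] g1 ℓ := by
      have hmem : Set.Ioo (0 : ℝ) 1 ∈ nhds x :=
        isOpen_Ioo.mem_nhds ⟨hx0, hx1⟩
      filter_upwards [hmem] with y hy
      exact (hasDerivAt_phi1 ℓ hy.1 (ne_of_lt hy.2)).deriv
    have hd1 : deriv (phi ℓ 1) x = g1 ℓ x := (hasDerivAt_phi1 ℓ hx0 hxne).deriv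
    have hd2 : deriv (deriv (phi ℓ 1)) x = g2 ℓ x := by
      rw [hEq.deriv_eq]
      exact (hasDerivAt_g1 ℓ hx0 hxne).deriv
    rw [hd1, hd2]
    -- reduce to a sum identity
    unfold g1 g2 hEll
    rw [Finset.mul_sum, Finset.mul_sum, ← Finset.sum_sub_distrib]
    have hterm : ∀ k ∈ Finset.range ℓ,
        (1 - x) * (3 * (x - Real.cos (theta ℓ k)) ^ 2 *
            (1 + x ^ 2 - 2 * x * Real.cos (theta ℓ k)) ^ ((-5 : ℝ) / 2) -
          (1 + x ^ 2 - 2 * x * Real.cos (theta ℓ k)) ^ ((-3 : ℝ) / 2)) -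
        2 * (-((x - Real.cos (theta ℓ k)) *
            (1 + x ^ 2 - 2 * x * Real.cos (theta ℓ k)) ^ ((-3 : ℝ) / 2))) =
        (1 - Real.cos (theta ℓ k)) *
          (2 * x ^ 2 + x * (3 - Real.cos (theta ℓ k)) - 1 - 3 * Real.cos (theta ℓ k)) /
            (1 + x ^ 2 - 2 * x * Real.cos (theta ℓ k)) ^ ((5 : ℝ) / 2) := by
      intro k _
      exact key_term _ _ (Q_pos_aux hx0 hxne (Real.cos_le_one _))
    rw [Finset.sum_congr rfl hterm]
    rw [Finset.range_eq_Ico, Finset.sum_eq_sum_Ico_succ_bot (by omega : 0 < ℓ)]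
    have h0 : theta ℓ 0 = 0 := by simp [theta]
    rw [h0]
    simp
  · intro x hx
    have hx0 : 0 < x := by linarith
    have hxne : x ≠ 1 := by linarith
    unfold hEll
    apply Finset.sum_pos
    · intro k hk
      rw [Finset.mem_Ico] at hk
      have hc1 : Real.cos (theta ℓ k) < 1 := cos_theta_lt_one ℓ k hk.1 hk.2
      have hc2 : -1 ≤ Real.cos (theta ℓ k) := Real.neg_one_le_cos _
      have hQ : 0 < 1 + x ^ 2 - 2 * x * Real.cos (theta ℓ k) :=
        Q_pos_aux hx0 hxne hc1.le
      have hP : (0 : ℝ) < (1 + x ^ 2 - 2 * x * Real.cos (theta ℓ k)) ^ ((5 : ℝ) / 2) :=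
        Real.rpow_pos_of_pos hQ _
      apply div_pos _ hP
      apply mul_pos (by linarith)
      nlinarith
    · exact Finset.nonempty_Ico.mpr (by omega)
end
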